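/- arXiv:1905.03841 — 4 statements merged into one kernel-verified Lean document; each statement's English description precedes it below -/
import Mathlib

section
/- Observational entropy is monotone under refinement of coarse-grainings: if each macrostate of the coarser partition is a disjoint union of macrostates of the finer partition (so that probabilities and volumes of the coarser macrostates are the sums over the corresponding finer ones), then the observational entropy of the coarser partition is greater than or equal to that of the finer partition. -/
open Finset Real

lemma logsum_fiber {J : Type*} [Fintype J] (s : Finset J) (v q : J → ℝ)
    (hv : ∀ j, 0 < v j) (hq : ∀ j, 0 ≤ q j) :
    (∑ j ∈ s, q j) * Real.log ((∑ j ∈ s, q j) / (∑ j ∈ s, v j)) ≤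
      ∑ j ∈ s, q j * Real.log (q j / v j) := by
  rcases s.eq_empty_or_nonempty with rfl | hs
  · simp
  set p := ∑ j ∈ s, q j with hp
  set V := ∑ j ∈ s, v j with hV
  have hV0 : 0 < V := Finset.sum_pos (fun j _ => hv j) hs
  have hp0 : 0 ≤ p := Finset.sum_nonneg (fun j _ => hq j)
  rcases eq_or_lt_of_le hp0 with hpz | hppos
  · have hall : ∀ j ∈ s, q j = 0 := by
      intro j hj
      have := (Finset.sum_eq_zero_iff_of_nonneg (fun j _ => hq j)).1 hpz.symm
      exact this j hj
    have hz : ∑ j ∈ s, q j * Real.log (q j / v j) = 0 :=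
      Finset.sum_eq_zero fun j hj => by rw [hall j hj]; ring
    rw [← hpz, hz]; simp
  -- key pointwise bound: q j * log (q j / v j) ≥ q j * log (p/V) + q j - p * v j / V
  have key : ∀ j ∈ s, q j * Real.log (p / V) + (q j - p * v j / V) ≤ q j * Real.log (q j / v j) := by
    intro j hj
    have hvj := hv j
    rcases eq_or_lt_of_le (hq j) with hqz | hqpos
    · rw [← hqz]
      simp only [zero_mul, zero_sub, zero_add]
      have : 0 ≤ p * v j / V := div_nonneg (mul_nonneg hp0 hvj.le) hV0.le
      linarith
    · have hx : (0:ℝ) < (q j * V) / (v j * p) := div_pos (mul_pos hqpos hV0) (mul_pos hvj hppos)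
      have hlog := Real.one_sub_inv_le_log_of_pos hx
      have hinv : ((q j * V) / (v j * p))⁻¹ = (v j * p) / (q j * V) := by
        rw [inv_div]
      rw [hinv] at hlog
      have hlogeq : Real.log ((q j * V) / (v j * p)) =
          Real.log (q j / v j) - Real.log (p / V) := by
        rw [Real.log_div (mul_pos hqpos hV0).ne' (mul_pos hvj hppos).ne',
          Real.log_div hqpos.ne' hvj.ne', Real.log_div hppos.ne' hV0.ne',
          Real.log_mul hqpos.ne' hV0.ne', Real.log_mul hvj.ne' hppos.ne']
        ring
      rw [hlogeq] at hlog
      have := mul_le_mul_of_nonneg_left hlog (le_of_lt hqpos)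
      have heq : q j * (1 - v j * p / (q j * V)) = q j - p * v j / V := by
        field_simp
      nlinarith [this, heq]
  calc p * Real.log (p / V) = ∑ j ∈ s, (q j * Real.log (p / V) + (q j - p * v j / V)) := by
        rw [Finset.sum_add_distrib, Finset.sum_sub_distrib, ← Finset.sum_mul]
        simp only [← hp]
        have : ∑ j ∈ s, p * v j / V = p := by
          rw [← Finset.sum_div, ← Finset.mul_sum, ← hV]
          field_simp
        rw [this]; ring
    _ ≤ ∑ j ∈ s, q j * Real.log (q j / v j) := Finset.sum_le_sum key

theorem observational_entropy_monotone_refinement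
    {J I : Type*} [Fintype J] [Fintype I] [DecidableEq I]
    (v : J → ℝ) (q : J → ℝ) (f : J → I)
    (hv : ∀ j, 0 < v j) (hq : ∀ j, 0 ≤ q j)
    (hqsum : ∑ j, q j = 1)
    (hf : Function.Surjective f) :
    -∑ i, (∑ j ∈ Finset.univ.filter (fun j => f j = i), q j) *
        Real.log ((∑ j ∈ Finset.univ.filter (fun j => f j = i), q j) /
          (∑ j ∈ Finset.univ.filter (fun j => f j = i), v j))
      ≥ -∑ j, q j * Real.log (q j / v j) := by
  have h1 : ∑ j, q j * Real.log (q j / v j) =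
      ∑ i, ∑ j ∈ Finset.univ.filter (fun j => f j = i), q j * Real.log (q j / v j) := by
    rw [Finset.sum_fiberwise]
  rw [h1, ge_iff_le, neg_le_neg_iff]
  exact Finset.sum_le_sum fun i _ =>
    logsum_fiber (Finset.univ.filter (fun j => f j = i)) v q hv hq
end

section
/- Equality in the refinement monotonicity of observational entropy holds if and only if within each coarser macrostate of nonzero volume, the probability is distributed proportionally to volume among the finer macrostates: for all i with V_i ≠ 0 and all j with f(j) = i, q_j = (v_j / V_i) * p_i. -/
open Finset Real

lemma fiber_log_sum {ι : Type*} (t : Finset ι) (ht : t.Nonempty) (v q : ι → ℝ)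
    (hv : ∀ j ∈ t, 0 < v j) (hq : ∀ j ∈ t, 0 ≤ q j) :
    (∑ j ∈ t, q j) * Real.log ((∑ j ∈ t, q j) / (∑ j ∈ t, v j))
      ≤ ∑ j ∈ t, q j * Real.log (q j / v j) ∧
    ((∑ j ∈ t, q j) * Real.log ((∑ j ∈ t, q j) / (∑ j ∈ t, v j))
      = ∑ j ∈ t, q j * Real.log (q j / v j) ↔
     ∀ j ∈ t, q j = (v j / (∑ j ∈ t, v j)) * (∑ j ∈ t, q j)) := by
  set W := ∑ j ∈ t, v j with hWdef
  set P := ∑ j ∈ t, q j with hPdef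
  have hW : 0 < W := Finset.sum_pos hv ht
  set w : ι → ℝ := fun j => v j / W with hw
  set x : ι → ℝ := fun j => q j / v j with hx
  have h₀ : ∀ j ∈ t, 0 < w j := fun j hj => div_pos (hv j hj) hW
  have h₁ : ∑ j ∈ t, w j = 1 := by
    rw [hw, ← Finset.sum_div, ← hWdef, div_self hW.ne']
  have hmem : ∀ j ∈ t, x j ∈ Set.Ici (0 : ℝ) := fun j hj =>
    div_nonneg (hq j hj) (hv j hj).le
  have hbar : ∑ j ∈ t, w j • x j = P / W := by
    rw [hPdef, Finset.sum_div]
    refine Finset.sum_congr rfl fun j hj => ?_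
    have := (hv j hj).ne'
    simp only [hw, hx, smul_eq_mul]
    field_simp
  have hsf : ∑ j ∈ t, w j • ((fun y => y * Real.log y) (x j))
      = (1 / W) * ∑ j ∈ t, q j * Real.log (q j / v j) := by
    rw [Finset.mul_sum]
    refine Finset.sum_congr rfl fun j hj => ?_
    have := (hv j hj).ne'
    simp only [hw, hx, smul_eq_mul]
    field_simp
  have hconv := Real.strictConvexOn_mul_log
  have hle := hconv.convexOn.map_sum_le (fun j hj => (h₀ j hj).le) h₁ hmem
  rw [hbar, hsf] at hle
  have key : (P / W) * Real.log (P / W) = (1 / W) * (P * Real.log (P / W)) := by ring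
  constructor
  · have := hle
    rw [key] at this
    exact le_of_mul_le_mul_left (by simpa [mul_comm] using this) (by positivity : (0:ℝ) < 1 / W)
  · have heq := hconv.map_sum_eq_iff h₀ h₁ hmem
    rw [hbar, hsf, key] at heq
    constructor
    · intro h
      have : (1 / W) * (P * Real.log (P / W))
          = (1 / W) * ∑ j ∈ t, q j * Real.log (q j / v j) := by rw [h]
      have h2 := heq.mp this
      intro j hj
      have h3 : q j / v j = P / W := h2 j hj
      rw [div_eq_div_iff (hv j hj).ne' hW.ne'] at h3
      field_simp
      linarith [h3]
    · intro h
      have h2 : ∀ j ∈ t, x j = P / W := by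
        intro j hj
        show q j / v j = P / W
        have hvj := (hv j hj).ne'
        rw [h j hj]
        field_simp
      have := heq.mpr h2
      exact mul_left_cancel₀ (by positivity : (1:ℝ)/W ≠ 0) this

theorem observational_entropy_refinement_equality_iff
    {J I : Type*} [Fintype J] [Fintype I] [DecidableEq I]
    (v : J → ℝ) (q : J → ℝ) (f : J → I)
    (hv : ∀ j, 0 < v j) (hq : ∀ j, 0 ≤ q j)
    (hqsum : ∑ j, q j = 1)
    (hf : Function.Surjective f)
    (p : I → ℝ) (V : I → ℝ)
    (hp : ∀ i, p i = ∑ j ∈ Finset.univ.filter (fun j => f j = i), q j)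
    (hV : ∀ i, V i = ∑ j ∈ Finset.univ.filter (fun j => f j = i), v j) :
    (-∑ i, p i * Real.log (p i / V i) = -∑ j, q j * Real.log (q j / v j))
      ↔ (∀ i, V i ≠ 0 → ∀ j, f j = i → q j = (v j / V i) * p i) := by
  classical
  set t : I → Finset J := fun i => Finset.univ.filter (fun j => f j = i) with ht
  have htne : ∀ i, (t i).Nonempty := by
    intro i
    obtain ⟨j, hj⟩ := hf i
    exact ⟨j, by simp [ht, hj]⟩
  have hfib := fun i => fiber_log_sum (t i) (htne i) v q
    (fun j _ => hv j) (fun j _ => hq j)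
  have hVpos : ∀ i, 0 < V i := fun i =>
    (hV i) ▸ Finset.sum_pos (fun j _ => hv j) (htne i)
  have hsplit : ∑ j, q j * Real.log (q j / v j)
      = ∑ i, ∑ j ∈ t i, q j * Real.log (q j / v j) :=
    (Finset.sum_fiberwise Finset.univ f _).symm
  rw [neg_inj, hsplit]
  have hterm : ∀ i ∈ Finset.univ (α := I),
      p i * Real.log (p i / V i) ≤ ∑ j ∈ t i, q j * Real.log (q j / v j) := by
    intro i _
    rw [hp i, hV i]
    exact (hfib i).1
  rw [Finset.sum_eq_sum_iff_of_le hterm]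
  constructor
  · intro h i hVi j hji
    have := (hfib i).2.mp (by rw [← hp i, ← hV i]; exact h i (Finset.mem_univ i))
    have hj : j ∈ t i := by simp [ht, hji]
    rw [← hV i, ← hp i] at this
    exact this j hj
  · intro h i _
    rw [hp i, hV i]
    refine (hfib i).2.mpr fun j hj => ?_
    rw [← hV i, ← hp i]
    exact h i (hVpos i).ne' j (by simpa [ht] using hj)
end

section
/- Observational entropy is non-increasing under intersection with an additional coarse-graining: if the joint macrostates (i, j) with probabilities p_{ij} and volumes V_{ij} refine the macrostates i (p_i = ∑_j p_{ij}, V_i = ∑_j V_{ij}), then -∑_{i,j} p_{ij} ln(p_{ij}/V_{ij}) ≤ -∑_i p_i ln(p_i/V_i). -/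
open Finset Real

lemma log_sum_ineq_aux {J : Type*} [Fintype J] (a b : J → ℝ)
    (ha : ∀ j, 0 ≤ a j) (hb : ∀ j, 0 ≤ b j) (hb0 : ∀ j, b j = 0 → a j = 0)
    (hB : 0 < ∑ j, b j) :
    (∑ j, a j) * Real.log ((∑ j, a j) / (∑ j, b j)) ≤ ∑ j, a j * Real.log (a j / b j) := by
  set A := ∑ j, a j with hA
  set B := ∑ j, b j with hBdef
  rcases eq_or_lt_of_le (Finset.sum_nonneg fun j _ => ha j) with h0 | hApos
  · have hz : ∀ j ∈ Finset.univ, a j = 0 :=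
      (Finset.sum_eq_zero_iff_of_nonneg fun j _ => ha j).mp h0.symm
    have : ∀ j, a j * Real.log (a j / b j) = 0 := fun j => by
      rw [hz j (Finset.mem_univ j)]; ring
    have hA0 : A = 0 := by rw [hA, ← h0]
    simp [hA0, this]
  · have key : ∀ j ∈ Finset.univ,
        a j * Real.log (A / B) + (a j - b j * (A / B)) ≤ a j * Real.log (a j / b j) := by
      intro j _
      rcases eq_or_lt_of_le (ha j) with haj | haj
      · rw [← haj]
        have : 0 ≤ b j * (A / B) := mul_nonneg (hb j) (div_nonneg hApos.le hB.le)
        simp; linarith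
      · have hbj : 0 < b j := by
          rcases eq_or_lt_of_le (hb j) with h | h
          · exact absurd (hb0 j h.symm) (by positivity)
          · exact h
        have hlog : Real.log (b j * A / (a j * B)) ≤ b j * A / (a j * B) - 1 :=
          Real.log_le_sub_one_of_pos (by positivity)
        have heq : Real.log (a j / b j) - Real.log (A / B)
            = - Real.log (b j * A / (a j * B)) := by
          have hA' : (0:ℝ) < A := hApos
          rw [Real.log_div haj.ne' hbj.ne',
            Real.log_div (mul_pos hbj hA').ne' (mul_pos haj hB).ne',
            Real.log_div hA'.ne' hB.ne',
            Real.log_mul hbj.ne' hA'.ne', Real.log_mul haj.ne' hB.ne']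
          ring
        have h2 : a j * Real.log (a j / b j) - a j * Real.log (A / B)
            = a j * (- Real.log (b j * A / (a j * B))) := by rw [← heq]; ring
        have h3 : a j * (- Real.log (b j * A / (a j * B)))
            ≥ a j * (1 - b j * A / (a j * B)) := by
          apply mul_le_mul_of_nonneg_left _ haj.le
          linarith
        have h4 : a j * (1 - b j * A / (a j * B)) = a j - b j * (A / B) := by
          field_simp
        linarith
    have := Finset.sum_le_sum key
    rw [Finset.sum_add_distrib, ← Finset.sum_mul, Finset.sum_sub_distrib,
      ← Finset.sum_mul] at this
    have hBA : B * (A / B) = A := by field_simp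
    rw [← hA, ← hBdef] at this
    linarith [this]

theorem observational_entropy_nonincreasing_joint
    {I J : Type*} [Fintype I] [Fintype J]
    (V : I → J → ℝ) (p : I → J → ℝ)
    (hV : ∀ i j, 0 ≤ V i j) (hVpos : ∀ i, 0 < ∑ j, V i j)
    (hp : ∀ i j, 0 ≤ p i j)
    (hpsum : ∑ i, ∑ j, p i j = 1)
    (hpV : ∀ i j, V i j = 0 → p i j = 0) :
    -∑ i, ∑ j, p i j * Real.log (p i j / V i j)
      ≤ -∑ i, (∑ j, p i j) * Real.log ((∑ j, p i j) / (∑ j, V i j)) := by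
  apply neg_le_neg
  apply Finset.sum_le_sum
  intro i _
  exact log_sum_ineq_aux (p i) (V i) (hp i) (hV i) (hpV i) (hVpos i)
end

section
/- Observational entropy coincides with Gibbs entropy if and only if the coarse-graining is constant on the level sets of the density: with p_i = ∑_{k∈P_i} μ ρ_k and V_i = μ |P_i| for a partition {P_i} of a finite microstate set, -∑_i p_i ln(p_i/V_i) = -∑_k μ ρ_k ln ρ_k holds if and only if ρ is constant on each block P_i of the partition. -/
open Finset Real

private lemma block_le {K : Type*} (s : Finset K) (ρ : K → ℝ)
    (hρ : ∀ k ∈ s, 0 ≤ ρ k) :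
    (∑ k ∈ s, ρ k) * Real.log ((∑ k ∈ s, ρ k) / s.card)
      ≤ ∑ k ∈ s, ρ k * Real.log (ρ k) := by
  rcases s.eq_empty_or_nonempty with rfl | hs
  · simp
  have hn : (0 : ℝ) < s.card := by exact_mod_cast Finset.card_pos.mpr hs
  have h₁ : ∑ _k ∈ s, ((s.card : ℝ))⁻¹ = 1 := by
    rw [Finset.sum_const, nsmul_eq_mul, mul_inv_cancel₀ hn.ne']
  have hJ := Real.convexOn_mul_log.map_sum_le (t := s)
      (w := fun _ => ((s.card : ℝ))⁻¹) (p := ρ)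
      (fun i _ => by positivity) h₁ (fun i hi => hρ i hi)
  simp only [smul_eq_mul, ← Finset.mul_sum] at hJ
  have hLHS : (∑ k ∈ s, ρ k) / s.card = ((s.card : ℝ))⁻¹ * ∑ k ∈ s, ρ k := by
    rw [div_eq_inv_mul]
  rw [hLHS]
  calc (∑ k ∈ s, ρ k) * Real.log (((s.card : ℝ))⁻¹ * ∑ k ∈ s, ρ k)
      = (s.card : ℝ) * ((((s.card : ℝ))⁻¹ * ∑ k ∈ s, ρ k) *
          Real.log (((s.card : ℝ))⁻¹ * ∑ k ∈ s, ρ k)) := by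
        field_simp
    _ ≤ (s.card : ℝ) * (((s.card : ℝ))⁻¹ * ∑ k ∈ s, ρ k * Real.log (ρ k)) := by
        apply mul_le_mul_of_nonneg_left _ hn.le
        exact hJ
    _ = ∑ k ∈ s, ρ k * Real.log (ρ k) := by field_simp

private lemma block_eq_iff {K : Type*} (s : Finset K) (ρ : K → ℝ)
    (hρ : ∀ k ∈ s, 0 ≤ ρ k) :
    (∑ k ∈ s, ρ k) * Real.log ((∑ k ∈ s, ρ k) / s.card)
      = ∑ k ∈ s, ρ k * Real.log (ρ k) ↔ ∀ k ∈ s, ∀ k' ∈ s, ρ k = ρ k' := by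
  rcases s.eq_empty_or_nonempty with rfl | hs
  · simp
  have hn : (0 : ℝ) < s.card := by exact_mod_cast Finset.card_pos.mpr hs
  have h₁ : ∑ _k ∈ s, ((s.card : ℝ))⁻¹ = 1 := by
    rw [Finset.sum_const, nsmul_eq_mul, mul_inv_cancel₀ hn.ne']
  have hJ := Real.strictConvexOn_mul_log.map_sum_eq_iff (t := s)
      (w := fun _ => ((s.card : ℝ))⁻¹) (p := ρ)
      (fun i _ => by positivity) h₁ (fun i hi => hρ i hi)
  simp only [smul_eq_mul, ← Finset.mul_sum] at hJ
  set S : ℝ := ∑ k ∈ s, ρ k with hS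
  set A : ℝ := ∑ k ∈ s, ρ k * Real.log (ρ k) with hA
  have hdiv : S / s.card = ((s.card : ℝ))⁻¹ * S := div_eq_inv_mul _ _
  constructor
  · intro h k hk k' hk'
    rw [hdiv] at h
    have heq : (((s.card : ℝ))⁻¹ * S) * Real.log (((s.card : ℝ))⁻¹ * S)
        = ((s.card : ℝ))⁻¹ * A := by
      calc (((s.card : ℝ))⁻¹ * S) * Real.log (((s.card : ℝ))⁻¹ * S)
          = ((s.card : ℝ))⁻¹ * (S * Real.log (((s.card : ℝ))⁻¹ * S)) := by ring
        _ = ((s.card : ℝ))⁻¹ * A := by rw [h]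
    have := hJ.mp heq
    rw [this k hk, this k' hk']
  · intro h
    obtain ⟨k₀, hk₀⟩ := hs
    have hconst : ∀ k ∈ s, ρ k = ρ k₀ := fun k hk => h k hk k₀ hk₀
    have hSval : S = s.card * ρ k₀ := by
      rw [hS, Finset.sum_congr rfl hconst, Finset.sum_const, nsmul_eq_mul]
    have hAval : A = s.card * (ρ k₀ * Real.log (ρ k₀)) := by
      rw [hA, Finset.sum_congr rfl (fun k hk => by rw [hconst k hk]),
        Finset.sum_const, nsmul_eq_mul]
    have hx : (s.card : ℝ) * ρ k₀ / s.card = ρ k₀ := by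
      rw [mul_comm, mul_div_assoc, div_self hn.ne', mul_one]
    rw [hSval, hAval, hx]
    ring

theorem observational_entropy_eq_gibbs_iff
    {K I : Type*} [Fintype K] [Fintype I] [DecidableEq K]
    (μ : ℝ) (hμ : 0 < μ)
    (ρ : K → ℝ) (hρ : ∀ k, 0 ≤ ρ k)
    (hρsum : ∑ k, μ * ρ k = 1)
    (P : I → Finset K)
    (hdisj : ∀ i i', i ≠ i' → Disjoint (P i) (P i'))
    (hcover : ∀ k, ∃ i, k ∈ P i)
    (V p : I → ℝ)
    (hV : ∀ i, V i = μ * (P i).card)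
    (hp : ∀ i, p i = μ * ∑ k ∈ P i, ρ k) :
    (-∑ i, p i * Real.log (p i / V i) = -∑ k, μ * ρ k * Real.log (ρ k))
      ↔ (∀ i, ∀ k ∈ P i, ∀ k' ∈ P i, ρ k = ρ k') := by
  classical
  -- rewrite each observational term
  have hterm : ∀ i, p i * Real.log (p i / V i)
      = μ * ((∑ k ∈ P i, ρ k) * Real.log ((∑ k ∈ P i, ρ k) / (P i).card)) := by
    intro i
    rcases Nat.eq_zero_or_pos (P i).card with h0 | hpos
    · have he : P i = ∅ := Finset.card_eq_zero.mp h0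
      simp [hp i, hV i, he]
    · have hdivs : p i / V i = (∑ k ∈ P i, ρ k) / (P i).card := by
        rw [hp i, hV i, mul_div_mul_left _ _ hμ.ne']
      rw [hdivs, hp i]; ring
  -- the partition lemma for sums
  have hU : Finset.univ.biUnion P = (Finset.univ : Finset K) := by
    apply Finset.eq_univ_iff_forall.mpr
    intro k
    obtain ⟨i, hi⟩ := hcover k
    exact Finset.mem_biUnion.mpr ⟨i, Finset.mem_univ i, hi⟩
  have hpart : ∀ g : K → ℝ, ∑ k, g k = ∑ i, ∑ k ∈ P i, g k := by
    intro g
    calc ∑ k, g k = ∑ k ∈ Finset.univ.biUnion P, g k := by rw [hU]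
      _ = ∑ i, ∑ k ∈ P i, g k :=
        Finset.sum_biUnion (fun i _ j _ hij => hdisj i j hij)
  have hgibbs : ∑ k, μ * ρ k * Real.log (ρ k)
      = ∑ i, μ * ∑ k ∈ P i, ρ k * Real.log (ρ k) := by
    rw [hpart (fun k => μ * ρ k * Real.log (ρ k))]
    refine Finset.sum_congr rfl fun i _ => ?_
    rw [Finset.mul_sum]
    exact Finset.sum_congr rfl fun k _ => by ring
  rw [neg_inj, Finset.sum_congr rfl fun i _ => hterm i, hgibbs]
  -- now it's a sum of pointwise inequalities
  have hle : ∀ i ∈ (Finset.univ : Finset I),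
      0 ≤ μ * ∑ k ∈ P i, ρ k * Real.log (ρ k)
        - μ * ((∑ k ∈ P i, ρ k) * Real.log ((∑ k ∈ P i, ρ k) / (P i).card)) := by
    intro i _
    have := block_le (P i) ρ (fun k _ => hρ k)
    nlinarith [this, hμ.le]
  constructor
  · intro h i
    have hsum0 : ∑ i, (μ * ∑ k ∈ P i, ρ k * Real.log (ρ k)
        - μ * ((∑ k ∈ P i, ρ k) * Real.log ((∑ k ∈ P i, ρ k) / (P i).card))) = 0 := by
      rw [Finset.sum_sub_distrib, h, sub_self]
    have hzero := (Finset.sum_eq_zero_iff_of_nonneg hle).mp hsum0 i (Finset.mem_univ i)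
    have heq : (∑ k ∈ P i, ρ k) * Real.log ((∑ k ∈ P i, ρ k) / (P i).card)
        = ∑ k ∈ P i, ρ k * Real.log (ρ k) := by
      have := sub_eq_zero.mp hzero
      have := mul_left_cancel₀ hμ.ne' this.symm
      linarith
    exact (block_eq_iff (P i) ρ (fun k _ => hρ k)).mp heq
  · intro h
    apply Finset.sum_congr rfl
    intro i _
    rw [(block_eq_iff (P i) ρ (fun k _ => hρ k)).mpr (h i)]
end
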